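/- arXiv:2008.11764 — 6 statements merged into one kernel-verified Lean document; each statement's English description precedes it below -/
import Mathlib

section
/- Schwarz inequality for sub-unital completely positive maps: let Φ be the completely positive map from D×D to D'×D' complex matrices given by Kraus operators K : Fin m → Matrix (Fin D') (Fin D) ℂ, i.e. Φ(X) = ∑_a (K a) * X * (K a)ᴴ, and assume Φ is sub-unital, i.e. ∑_a (K a) * (K a)ᴴ ≤ 1 in the Loewner order. Then for every X : Matrix (Fin D) (Fin D) ℂ one has Φ(X) * Φ(Xᴴ) ≤ Φ(X * Xᴴ) in the Loewner order. -/
open Matrix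
open scoped ComplexOrder

/-!
With `M = Φ(X)` and `S = ∑ a, K a * (K a)ᴴ`, expanding the squares gives
`Φ(X Xᴴ) - M Mᴴ = ∑ a, (K a X - M K a)(K a X - M K a)ᴴ + M (1 - S) Mᴴ`,
a sum of positive semidefinite matrices once `S ≤ 1`.
-/

namespace Matrix

variable {ι m n R : Type*} [Fintype ι] [Fintype n]

section StarRing

variable [CommRing R] [StarRing R]

def krausMap (K : ι → Matrix m n R) (X : Matrix n n R) : Matrix m m R :=
  ∑ a, K a * X * (K a)ᴴ

theorem krausMap_conjTranspose (K : ι → Matrix m n R) (X : Matrix n n R) :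
    krausMap K Xᴴ = (krausMap K X)ᴴ := by
  simp only [krausMap, conjTranspose_sum, conjTranspose_mul, conjTranspose_conjTranspose,
    Matrix.mul_assoc]

theorem sum_mul_conjTranspose_sub_mul [Fintype m] (K : ι → Matrix m n R) (X : Matrix n n R)
    (M : Matrix m m R) :
    ∑ a, (K a * X - M * K a) * (K a * X - M * K a)ᴴ =
      krausMap K (X * Xᴴ) - krausMap K X * Mᴴ - M * (krausMap K X)ᴴ
        + M * (∑ a, K a * (K a)ᴴ) * Mᴴ := by
  have expand : ∀ a, (K a * X - M * K a) * (K a * X - M * K a)ᴴ =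
      K a * (X * Xᴴ) * (K a)ᴴ - K a * X * (K a)ᴴ * Mᴴ - M * (K a * Xᴴ * (K a)ᴴ)
        + M * (K a * (K a)ᴴ) * Mᴴ := by
    intro a
    simp only [conjTranspose_sub, conjTranspose_mul, Matrix.sub_mul, Matrix.mul_sub,
      Matrix.mul_assoc]
    abel
  rw [← krausMap_conjTranspose]
  simp only [expand, Finset.sum_add_distrib, Finset.sum_sub_distrib, ← Finset.sum_mul,
    ← Finset.mul_sum, krausMap]

theorem krausMap_mul_conjTranspose_sub [Fintype m] [DecidableEq m] (K : ι → Matrix m n R)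
    (X : Matrix n n R) :
    krausMap K (X * Xᴴ) - krausMap K X * (krausMap K X)ᴴ =
      ∑ a, (K a * X - krausMap K X * K a) * (K a * X - krausMap K X * K a)ᴴ
        + krausMap K X * (1 - ∑ a, K a * (K a)ᴴ) * (krausMap K X)ᴴ := by
  rw [sum_mul_conjTranspose_sub_mul, Matrix.mul_sub, Matrix.sub_mul, Matrix.mul_one]
  abel

end StarRing

theorem PosSemidef.krausMap_mul_conjTranspose_sub [CommRing R] [PartialOrder R] [StarRing R]
    [StarOrderedRing R] [Fintype m] [DecidableEq m] (K : ι → Matrix m n R)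
    (hsub : (1 - ∑ a, K a * (K a)ᴴ).PosSemidef) (X : Matrix n n R) :
    (krausMap K (X * Xᴴ) - krausMap K X * (krausMap K X)ᴴ).PosSemidef := by
  rw [Matrix.krausMap_mul_conjTranspose_sub]
  exact (posSemidef_sum _ fun a _ => posSemidef_self_mul_conjTranspose _).add
    (hsub.mul_mul_conjTranspose_same _)

end Matrix

/-- Schwarz inequality for sub-unital completely positive maps: if
`Φ(X) = ∑ a, K a * X * (K a)ᴴ` is sub-unital (`∑ a, K a * (K a)ᴴ ≤ 1` in the Loewner order,
i.e. `1 - ∑ a, K a * (K a)ᴴ` is positive semidefinite), then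
`Φ(X) * Φ(Xᴴ) ≤ Φ(X * Xᴴ)` in the Loewner order. -/
theorem schwarz_inequality_subunital_CP
    (D D' m : ℕ) (K : Fin m → Matrix (Fin D') (Fin D) ℂ)
    (hsub : ((1 : Matrix (Fin D') (Fin D') ℂ) - ∑ a, K a * (K a)ᴴ).PosSemidef)
    (X : Matrix (Fin D) (Fin D) ℂ) :
    ((∑ a, K a * (X * Xᴴ) * (K a)ᴴ) -
      (∑ a, K a * X * (K a)ᴴ) * (∑ a, K a * Xᴴ * (K a)ᴴ)).PosSemidef := by
  have h := PosSemidef.krausMap_mul_conjTranspose_sub K hsub X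
  rwa [← krausMap_conjTranspose] at h
end

section
/- Let D ≥ 1 and let A be a D×D complex matrix all of whose characteristic-polynomial roots (in ℂ, counted with multiplicity) have modulus ≤ 1. Then the sequence n ↦ ‖trace(A^n)‖ converges to 1 as n → ∞ if and only if exactly one root of the characteristic polynomial of A (counted with multiplicity) has modulus 1, i.e. the multiset (A.charpoly.roots.filter (fun z => ‖z‖ = 1)) has cardinality 1. (This is the paper's statement that lim_{n→∞} log|tr(Aⁿ)| = 0 iff the greatest eigenvalue satisfies |a₁| = 1 and |a₂| < 1.) -/
open Matrix Filter
open scoped Classical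

open Topology Finset ComplexConjugate Polynomial

/-!
Over an algebraically closed field, `det (aeval A p)` is the product of `p λ` over the
eigenvalues `λ` of `A` (factor `p` into linear factors); taking `p = s - X ^ n` shows that the
eigenvalues of `A ^ n` are the `λ ^ n`, so `trace (A ^ n)` is the `n`-th power sum of the
eigenvalues. The eigenvalues inside the unit disc contribute a term tending to `0`, so only the
power sums `s n = ∑ zᵢ ^ n` of the unimodular eigenvalues `z₁, …, z_k` matter. If `k = 0` then
`s n = 0`, and if `k = 1` then `‖s n‖ = 1`. If `‖s n‖ → c`, average
`‖s n‖ ^ 2 = ∑ᵢⱼ (zᵢ * conj zⱼ) ^ n` over `n < N`: the geometric sums with `zᵢ ≠ zⱼ` stay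
bounded, so these Cesàro means tend to `#{(i, j) | zᵢ = zⱼ} ≥ k`, and `c = 1` forces `k ≤ 1`.
-/

namespace Multiset

lemma sum_map_ite_eq_count {α R : Type*} [DecidableEq α] [AddCommMonoidWithOne R]
    (P : Multiset α) (a : α) : (P.map fun b => if a = b then (1 : R) else 0).sum = P.count a := by
  induction P using Multiset.induction_on with
  | empty => simp
  | cons b P ih => simp [count_cons, ih, add_comm]

lemma card_le_sum_count {α : Type*} [DecidableEq α] (P : Multiset α) :
    card P ≤ (P.map fun a => P.count a).sum := by
  simpa using sum_map_le_sum_map (fun _ => 1) _ fun a ha => one_le_count_iff_mem.mpr ha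

end Multiset

namespace Matrix

variable {K ι : Type*} [Field K] [IsAlgClosed K] [Fintype ι] [DecidableEq ι]

lemma card_roots_charpoly (A : Matrix ι ι K) :
    Multiset.card A.charpoly.roots = Fintype.card ι := by
  rw [splits_iff_card_roots.mp (IsAlgClosed.splits _), charpoly_natDegree_eq_dim]

lemma det_sub_scalar_eq_prod_roots_charpoly (A : Matrix ι ι K) (μ : K) :
    (A - scalar ι μ).det = (A.charpoly.roots.map (· - μ)).prod := by
  have hneg : A.charpoly.roots.map (· - μ) = (A.charpoly.roots.map (μ - ·)).map Neg.neg := by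
    simp [Multiset.map_map]
  rw [← neg_sub, det_neg, ← eval_charpoly,
    (IsAlgClosed.splits _).eval_eq_prod_roots_of_monic A.charpoly_monic, hneg,
    Multiset.prod_map_neg, Multiset.card_map, card_roots_charpoly]

lemma det_aeval_eq_prod_roots_charpoly (A : Matrix ι ι K) (p : K[X]) :
    (aeval A p).det = (A.charpoly.roots.map p.eval).prod := by
  let detAeval : K[X] →* K := detMonoidHom.comp (aeval A).toMonoidHom
  have hC : ∀ c, detAeval (C c) = c ^ Fintype.card ι := fun c => by
    simp [detAeval, algebraMap_eq_diagonal]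
  have hX_sub_C : ∀ μ, detAeval (X - C μ) = (A.charpoly.roots.map (· - μ)).prod := fun μ => by
    rw [← det_sub_scalar_eq_prod_roots_charpoly]
    simp [detAeval, algebraMap_eq_diagonal, Pi.algebraMap_def]
  have hsplit := IsAlgClosed.splits p
  change detAeval p = _
  conv_lhs => rw [hsplit.eq_prod_roots]
  simp only [map_mul, map_multiset_prod, Multiset.map_map, Function.comp_def, hC, hX_sub_C,
    hsplit.eval_eq_prod_roots, Multiset.prod_map_mul, Multiset.map_const',
    Multiset.prod_replicate, card_roots_charpoly]
  rw [Multiset.prod_map_prod_map]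

lemma roots_charpoly_aeval (A : Matrix ι ι K) (p : K[X]) :
    (aeval A p).charpoly.roots = A.charpoly.roots.map p.eval := by
  suffices (aeval A p).charpoly = ((A.charpoly.roots.map p.eval).map fun b => X - C b).prod by
    rw [this, roots_multiset_prod_X_sub_C]
  refine Polynomial.funext fun s => ?_
  have hscalar : scalar ι s - aeval A p = aeval A (C s - p) := by
    simp [algebraMap_eq_diagonal, scalar_apply]
  rw [eval_charpoly, hscalar, det_aeval_eq_prod_roots_charpoly, eval_multiset_prod,
    Multiset.map_map, Multiset.map_map]
  simp [Function.comp_def]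

lemma trace_pow_eq_sum_roots_charpoly (A : Matrix ι ι K) (n : ℕ) :
    (A ^ n).trace = (A.charpoly.roots.map (· ^ n)).sum := by
  rw [trace_eq_sum_roots_charpoly, ← aeval_X_pow (R := K), roots_charpoly_aeval]
  simp

end Matrix

lemma tendsto_sum_pow_of_norm_lt_one {R : Type*} [SeminormedRing R] {Q : Multiset R}
    (hQ : ∀ z ∈ Q, ‖z‖ < 1) : Tendsto (fun n => (Q.map (· ^ n)).sum) atTop (𝓝 0) := by
  simpa using
    tendsto_multiset_sum Q fun z hz => tendsto_pow_atTop_nhds_zero_of_norm_lt_one (hQ z hz)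

lemma tendsto_norm_add_iff_of_tendsto_zero {α E : Type*} [SeminormedAddCommGroup E]
    {l : Filter α} {f g : α → E} {c : ℝ} (hg : Tendsto g l (𝓝 0)) :
    Tendsto (fun x => ‖f x + g x‖) l (𝓝 c) ↔ Tendsto (fun x => ‖f x‖) l (𝓝 c) := by
  have hdist : Tendsto (fun x => dist ‖f x + g x‖ ‖f x‖) l (𝓝 0) :=
    squeeze_zero (fun _ => dist_nonneg)
      (fun x => by simpa [Real.dist_eq] using abs_norm_sub_norm_le (f x + g x) (f x))
      (by simpa using hg.norm)
  exact ⟨fun h => tendsto_of_tendsto_of_dist h hdist,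
    fun h => tendsto_of_tendsto_of_dist h (by simpa only [dist_comm] using hdist)⟩

section PowerSums

variable {𝕜 : Type*} [RCLike 𝕜]

lemma mul_conj_eq_one_iff_of_norm_eq_one {a b : 𝕜} (hb : ‖b‖ = 1) :
    a * conj b = 1 ↔ a = b := by
  have hconj : conj b = b⁻¹ := by rw [RCLike.inv_def, hb]; simp
  rw [hconj, mul_inv_eq_one₀ (norm_ne_zero_iff.mp (by simp [hb]))]

lemma tendsto_cesaro_pow_of_norm_le_one {w : 𝕜} (hw : ‖w‖ ≤ 1) (hw1 : w ≠ 1) :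
    Tendsto (fun N : ℕ => (N⁻¹ : ℝ) • ∑ n ∈ range N, w ^ n) atTop (𝓝 0) := by
  have hbound : ∀ N, ‖∑ n ∈ range N, w ^ n‖ ≤ 2 / ‖w - 1‖ := fun N => by
    rw [geom_sum_eq hw1, norm_div]
    gcongr
    calc ‖w ^ N - 1‖ ≤ ‖w‖ ^ N + 1 := by simpa using norm_sub_le (w ^ N) 1
      _ ≤ 2 := by linarith [pow_le_one₀ (n := N) (norm_nonneg w) hw]
  refine squeeze_zero_norm (fun N => ?_)
    (by simpa using (tendsto_inv_atTop_nhds_zero_nat (𝕜 := ℝ)).mul_const (2 / ‖w - 1‖))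
  rw [norm_smul, Real.norm_of_nonneg (by positivity)]
  gcongr
  exact hbound N

lemma tendsto_cesaro_pow_mul_conj {a b : 𝕜} (ha : ‖a‖ = 1) (hb : ‖b‖ = 1) :
    Tendsto (fun N : ℕ => (N⁻¹ : ℝ) • ∑ n ∈ range N, (a * conj b) ^ n) atTop
      (𝓝 (if a = b then 1 else 0)) := by
  split_ifs with hab
  · simpa [(mul_conj_eq_one_iff_of_norm_eq_one hb).mpr hab] using
      (tendsto_const_nhds (x := (1 : 𝕜))).cesaro_smul
  · exact tendsto_cesaro_pow_of_norm_le_one (by simp [ha, hb])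
      ((mul_conj_eq_one_iff_of_norm_eq_one hb).not.mpr hab)

lemma norm_sum_pow_sq (P : Multiset 𝕜) (n : ℕ) :
    (‖(P.map (· ^ n)).sum‖ : 𝕜) ^ 2 =
      (P.map fun a => (P.map fun b => (a * conj b) ^ n).sum).sum := by
  simp only [← RCLike.mul_conj, map_multiset_sum, Multiset.map_map, Function.comp_def, map_pow,
    mul_pow, Multiset.sum_map_mul_left, Multiset.sum_map_mul_right]

lemma tendsto_cesaro_norm_sum_pow_sq {P : Multiset 𝕜} (hP : ∀ z ∈ P, ‖z‖ = 1) :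
    Tendsto (fun N : ℕ => (N⁻¹ : ℝ) • ∑ n ∈ range N, (‖(P.map (· ^ n)).sum‖ : 𝕜) ^ 2) atTop
      (𝓝 ((P.map fun a => P.count a).sum : 𝕜)) := by
  have hexpand : ∀ N : ℕ, (N⁻¹ : ℝ) • ∑ n ∈ range N, (‖(P.map (· ^ n)).sum‖ : 𝕜) ^ 2 =
      (P.map fun a => (P.map fun b =>
        (N⁻¹ : ℝ) • ∑ n ∈ range N, (a * conj b) ^ n).sum).sum := fun N => by
    simp only [norm_sum_pow_sq, Finset.sum_eq_multiset_sum]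
    rw [Multiset.sum_map_sum_map, Multiset.smul_sum, Multiset.map_map]
    refine congrArg _ (Multiset.map_congr rfl fun a _ => ?_)
    rw [Function.comp_apply, Multiset.sum_map_sum_map, Multiset.smul_sum, Multiset.map_map]
    rfl
  simp only [hexpand, Nat.cast_multiset_sum, Multiset.map_map, Function.comp_def,
    ← Multiset.sum_map_ite_eq_count]
  exact tendsto_multiset_sum _ fun a ha => tendsto_multiset_sum _ fun b hb =>
    tendsto_cesaro_pow_mul_conj (hP a ha) (hP b hb)

lemma card_le_sq_of_tendsto_norm_sum_pow {P : Multiset 𝕜} (hP : ∀ z ∈ P, ‖z‖ = 1) {c : ℝ}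
    (h : Tendsto (fun n => ‖(P.map (· ^ n)).sum‖) atTop (𝓝 c)) :
    (Multiset.card P : ℝ) ≤ c ^ 2 := by
  have hlim : Tendsto (fun N : ℕ => (N⁻¹ : ℝ) • ∑ n ∈ range N, (‖(P.map (· ^ n)).sum‖ : 𝕜) ^ 2)
      atTop (𝓝 ((c : 𝕜) ^ 2)) :=
    (((RCLike.continuous_ofReal.tendsto c).comp h).pow 2).cesaro_smul
  have hc := tendsto_nhds_unique hlim (tendsto_cesaro_norm_sum_pow_sq hP)
  have hcard := Multiset.card_le_sum_count P
  generalize (P.map fun a => P.count a).sum = k at hc hcard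
  have hc' : c ^ 2 = k := by exact_mod_cast hc
  rw [hc']
  exact_mod_cast hcard

lemma tendsto_norm_sum_pow_one_iff_card_eq_one {P : Multiset 𝕜} (hP : ∀ z ∈ P, ‖z‖ = 1) :
    Tendsto (fun n => ‖(P.map (· ^ n)).sum‖) atTop (𝓝 1) ↔ Multiset.card P = 1 := by
  refine ⟨fun h => ?_, fun h => ?_⟩
  · have hle : Multiset.card P ≤ 1 := by
      exact_mod_cast (card_le_sq_of_tendsto_norm_sum_pow hP h).trans_eq (one_pow 2)
    have hne : Multiset.card P ≠ 0 := fun h0 => by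
      simp [Multiset.card_eq_zero.mp h0] at h
    omega
  · obtain ⟨a, rfl⟩ := Multiset.card_eq_one.mp h
    simp [hP a (Multiset.mem_singleton_self a)]

end PowerSums

theorem tendsto_norm_trace_pow_iff_unique_peripheral_eigenvalue_general
    (D : ℕ) (A : Matrix (Fin D) (Fin D) ℂ)
    (hroots : ∀ z ∈ A.charpoly.roots, ‖z‖ ≤ 1) :
    Tendsto (fun n : ℕ => ‖(A ^ n).trace‖) atTop (nhds 1) ↔
      (A.charpoly.roots.filter (fun z => ‖z‖ = 1)).card = 1 := by
  set P := A.charpoly.roots.filter (fun z => ‖z‖ = 1)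
  set Q := A.charpoly.roots.filter (fun z => ¬‖z‖ = 1)
  have htrace (n : ℕ) : (A ^ n).trace = (P.map (· ^ n)).sum + (Q.map (· ^ n)).sum := by
    rw [trace_pow_eq_sum_roots_charpoly, ← Multiset.sum_add, ← Multiset.map_add,
      Multiset.filter_add_not]
  have hQ : Tendsto (fun n => (Q.map (· ^ n)).sum) atTop (𝓝 0) :=
    tendsto_sum_pow_of_norm_lt_one fun z hz =>
      (hroots z (Multiset.mem_of_mem_filter hz)).lt_of_ne (Multiset.mem_filter.mp hz).2
  simp only [htrace, tendsto_norm_add_iff_of_tendsto_zero hQ]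
  exact tendsto_norm_sum_pow_one_iff_card_eq_one fun z hz => (Multiset.mem_filter.mp hz).2

/-- For a `D × D` complex matrix (`D ≥ 1`) all of whose eigenvalues (roots of the
characteristic polynomial, with multiplicity) have modulus at most `1`, the sequence
`n ↦ ‖trace (A ^ n)‖` converges to `1` if and only if exactly one eigenvalue (with
multiplicity) has modulus `1`. -/
theorem tendsto_norm_trace_pow_iff_unique_peripheral_eigenvalue
    (D : ℕ) (hD : 1 ≤ D) (A : Matrix (Fin D) (Fin D) ℂ)
    (hroots : ∀ z ∈ A.charpoly.roots, ‖z‖ ≤ 1) :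
    Tendsto (fun n : ℕ => ‖(A ^ n).trace‖) atTop (nhds 1) ↔
      (A.charpoly.roots.filter (fun z => ‖z‖ = 1)).card = 1 :=
  tendsto_norm_trace_pow_iff_unique_peripheral_eigenvalue_general D A hroots
end

section
/- Let n ≥ 1 and let α : Fin n → ℂ be a family of complex numbers with r = max_{i} ‖α i‖ > 0. Then the limit superior, as k → ∞ over natural numbers, of the real sequence k ↦ ‖∑_{i} (α i)^k‖ ^ (1/(k:ℝ)) equals r. -/
/-!
The upper bound is the triangle inequality `‖∑ i, α i ^ k‖ ≤ n r ^ k` together with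
`n ^ (1 / k) → 1`. For the lower bound, pick `j` with `‖α j‖ = r` and put `w i = α i / α j`, so that
`‖w i‖ ≤ 1` and `w j = 1`. Since the geometric sums of a `w ≠ 1` in the closed unit disc stay
bounded, the Cesàro means of `k ↦ ∑ i, w i ^ k` converge to the number of `i` with `w i = 1`, which is
positive. If `‖∑ i, α i ^ k‖ ^ (1 / k) < ρ < r` for all large `k`, then
`∑ i, w i ^ k = (∑ i, α i ^ k) / α j ^ k` is eventually bounded by `(ρ / r) ^ k`, so it tends to `0`,
and so do its Cesàro means.
-/

open Filter Finset Topology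

theorem tendsto_const_rpow_one_div_natCast {C : ℝ} (hC : C ≠ 0) :
    Tendsto (fun k : ℕ => C ^ (1 / (k : ℝ))) atTop (𝓝 1) := by
  simpa [Function.comp_def] using
    (Real.continuousAt_const_rpow hC).tendsto.comp tendsto_one_div_atTop_nhds_zero_nat

theorem tendsto_cesaro_pow_of_ne_one {w : ℂ} (hw : ‖w‖ ≤ 1) (hw1 : w ≠ 1) :
    Tendsto (fun K : ℕ => (K : ℝ)⁻¹ • ∑ k ∈ range K, w ^ k) atTop (𝓝 0) := by
  have hgeom : ∀ K : ℕ, ‖∑ k ∈ range K, w ^ k‖ ≤ 2 / ‖w - 1‖ := fun K => by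
    rw [geom_sum_eq hw1, norm_div]
    gcongr
    calc ‖w ^ K - 1‖ ≤ ‖w ^ K‖ + ‖(1 : ℂ)‖ := norm_sub_le _ _
      _ ≤ 1 + 1 := by
        rw [norm_pow, norm_one]
        gcongr
        exact pow_le_one₀ (norm_nonneg w) hw
      _ = 2 := one_add_one_eq_two
  exact (tendsto_inv_atTop_nhds_zero_nat (𝕜 := ℝ)).zero_smul_isBoundedUnder_le
    (isBoundedUnder_of ⟨_, hgeom⟩)

theorem not_tendsto_sum_pow_zero {ι : Type*} [Fintype ι] {w : ι → ℂ} (hw : ∀ i, ‖w i‖ ≤ 1)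
    {j : ι} (hj : w j = 1) : ¬Tendsto (fun k : ℕ => ∑ i, w i ^ k) atTop (𝓝 0) := by
  classical
  intro h
  have hmean : Tendsto (fun K : ℕ => (K : ℝ)⁻¹ • ∑ k ∈ range K, ∑ i, w i ^ k) atTop
      (𝓝 (∑ i, if w i = 1 then 1 else 0)) := by
    have hswap : ∀ K : ℕ, (K : ℝ)⁻¹ • ∑ k ∈ range K, ∑ i, w i ^ k
        = ∑ i, (K : ℝ)⁻¹ • ∑ k ∈ range K, w i ^ k := fun K => by
      rw [Finset.sum_comm, Finset.smul_sum]
    simp_rw [hswap]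
    refine tendsto_finsetSum _ fun i _ => ?_
    split_ifs with hi
    · exact (tendsto_const_nhds.congr fun k => by rw [hi, one_pow]).cesaro_smul
    · exact tendsto_cesaro_pow_of_ne_one (hw i) hi
  have hcount := tendsto_nhds_unique hmean h.cesaro_smul
  rw [Finset.sum_boole, Nat.cast_eq_zero, Finset.card_eq_zero] at hcount
  exact Finset.notMem_empty j (hcount ▸ by simpa using hj)

theorem norm_sum_pow_rpow_le {ι : Type*} [Fintype ι] {α : ι → ℂ} {r : ℝ} (hr : 0 ≤ r)
    (hα : ∀ i, ‖α i‖ ≤ r) {k : ℕ} (hk : k ≠ 0) :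
    ‖∑ i, α i ^ k‖ ^ (1 / (k : ℝ)) ≤ (Fintype.card ι : ℝ) ^ (1 / (k : ℝ)) * r := by
  have hsum : ‖∑ i, α i ^ k‖ ≤ Fintype.card ι * r ^ k := by
    calc ‖∑ i, α i ^ k‖ ≤ ∑ i, ‖α i‖ ^ k := by
          simpa only [norm_pow] using norm_sum_le univ fun i => α i ^ k
      _ ≤ ∑ _i : ι, r ^ k := by gcongr with i; exact hα i
      _ = Fintype.card ι * r ^ k := by simp
  calc ‖∑ i, α i ^ k‖ ^ (1 / (k : ℝ)) ≤ (Fintype.card ι * r ^ k) ^ (1 / (k : ℝ)) := by gcongr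
    _ = (Fintype.card ι : ℝ) ^ (1 / (k : ℝ)) * r := by
      rw [Real.mul_rpow (by positivity) (by positivity), one_div, Real.pow_rpow_inv_natCast hr hk]

theorem frequently_le_norm_sum_pow_rpow {ι : Type*} [Fintype ι] {α : ι → ℂ} {j : ι}
    (hj : ∀ i, ‖α i‖ ≤ ‖α j‖) {ρ : ℝ} (hρ : ρ < ‖α j‖) :
    ∃ᶠ k : ℕ in atTop, ρ ≤ ‖∑ i, α i ^ k‖ ^ (1 / (k : ℝ)) := by
  intro h
  simp only [not_le] at h
  obtain ⟨k₀, hk₀⟩ := h.exists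
  have hρ0 : 0 ≤ ρ := (Real.rpow_nonneg (norm_nonneg _) _).trans hk₀.le
  have hαj : 0 < ‖α j‖ := hρ0.trans_lt hρ
  refine not_tendsto_sum_pow_zero (w := fun i => α i / α j) (fun i => ?_)
    (div_self (norm_pos_iff.1 hαj)) ?_
  · rw [norm_div]
    exact div_le_one_of_le₀ (hj i) hαj.le
  refine squeeze_zero_norm' ?_
    (tendsto_pow_atTop_nhds_zero_of_lt_one (by positivity) ((div_lt_one hαj).2 hρ))
  filter_upwards [h, eventually_ne_atTop 0] with k hk hk0
  have hpow : ‖∑ i, α i ^ k‖ ≤ ρ ^ k := by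
    rw [← Real.rpow_natCast, ← Real.rpow_inv_le_iff_of_pos (norm_nonneg _) hρ0
      (Nat.cast_pos.2 (Nat.pos_of_ne_zero hk0)), ← one_div]
    exact hk.le
  simp_rw [div_pow, ← Finset.sum_div, norm_div, norm_pow]
  gcongr

theorem limsup_rpow_norm_sum_pow_general
    (n : ℕ) (α : Fin n → ℂ) (r : ℝ)
    (hub : ∀ i, ‖α i‖ ≤ r) (hmem : ∃ i, ‖α i‖ = r) :
    limsup (fun k : ℕ => ‖∑ i, (α i) ^ k‖ ^ (1 / (k : ℝ))) atTop = r := by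
  obtain ⟨j, rfl⟩ := hmem
  have hbound : Tendsto (fun k : ℕ => (n : ℝ) ^ (1 / (k : ℝ)) * ‖α j‖) atTop (𝓝 ‖α j‖) := by
    simpa using (tendsto_const_rpow_one_div_natCast (Nat.cast_ne_zero.2 j.pos.ne')).mul_const
      ‖α j‖
  have hle : ∀ᶠ k : ℕ in atTop,
      ‖∑ i, α i ^ k‖ ^ (1 / (k : ℝ)) ≤ (n : ℝ) ^ (1 / (k : ℝ)) * ‖α j‖ := by
    filter_upwards [eventually_ne_atTop 0] with k hk
    simpa using norm_sum_pow_rpow_le (norm_nonneg _) hub hk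
  apply le_antisymm
  · calc _ ≤ limsup (fun k : ℕ => (n : ℝ) ^ (1 / (k : ℝ)) * ‖α j‖) atTop :=
          limsup_le_limsup hle (isCoboundedUnder_le_of_le _ fun _ => by positivity)
            hbound.isBoundedUnder_le
      _ = ‖α j‖ := hbound.limsup_eq
  · exact le_of_forall_lt_imp_le_of_dense fun ρ hρ => le_limsup_of_frequently_le
      (frequently_le_norm_sum_pow_rpow hub hρ) (hbound.isBoundedUnder_le.mono_le hle)

/-- For a finite family `α : Fin n → ℂ` (`n ≥ 1`) with `r = max_i ‖α i‖ > 0`, the limit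
superior of `k ↦ ‖∑ i, (α i) ^ k‖ ^ (1 / k)` as `k → ∞` equals `r`. -/
theorem limsup_rpow_norm_sum_pow
    (n : ℕ) (hn : 1 ≤ n) (α : Fin n → ℂ) (r : ℝ)
    (hub : ∀ i, ‖α i‖ ≤ r) (hmem : ∃ i, ‖α i‖ = r) (hpos : 0 < r) :
    limsup (fun k : ℕ => ‖∑ i, (α i) ^ k‖ ^ (1 / (k : ℝ))) atTop = r :=
  limsup_rpow_norm_sum_pow_general n α r hub hmem
end

section
/- Convergence of iterates to the fixed-point projection: let Φ : Matrix (Fin D) (Fin D) ℂ →ₗ[ℂ] Matrix (Fin D) (Fin D) ℂ be a linear map (of the D²-dimensional complex space of D×D matrices) whose characteristic polynomial has 1 as a root of multiplicity one while every other root has modulus < 1. Let P and Λ be D×D complex matrices with Φ(P) = P, trace(Λᴴ * Φ(X)) = trace(Λᴴ * X) for all X (i.e. Λ is a fixed point of the adjoint of Φ with respect to the Hilbert–Schmidt inner product), and trace(Λᴴ * P) = 1. Then for every X, the iterates Φ^m(X) converge entrywise, as m → ∞, to trace(Λᴴ * X) • P. -/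
/-!
Write `ℓ X = trace (Λᴴ * X)` and `T = Φ - ℓ(·) • P`. From `Φ P = P`, `ℓ ∘ Φ = ℓ` and `ℓ P = 1`,
`Φ^m X = ℓ X • P + T^m (X - ℓ X • P)`. An eigenvector of `T` for an eigenvalue `μ ≠ 0` lies in
`ker ℓ`, so it is an eigenvector of `Φ` for `μ`; and `μ ≠ 1`, since together with `P` it would span
a two-dimensional eigenspace of `Φ` for the simple root `1`. So the spectral radius of `T` is `< 1`
and Gelfand's formula gives `T^m → 0`.
-/

open Matrix Filter Topology

theorem tendsto_pow_nhds_zero_of_spectralRadius_lt_one {A : Type*} [NormedRing A]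
    [NormedAlgebra ℂ A] [CompleteSpace A] (a : A) (ha : spectralRadius ℂ a < 1) :
    Tendsto (fun n : ℕ => a ^ n) atTop (𝓝 0) := by
  obtain ⟨r, har, hr1⟩ := ENNReal.lt_iff_exists_nnreal_btwn.mp ha
  have hbound : ∀ᶠ n : ℕ in atTop, ‖a ^ n‖₊ ≤ r ^ n := by
    have hgelfand := spectrum.pow_nnnorm_pow_one_div_tendsto_nhds_spectralRadius a
    filter_upwards [hgelfand.eventually_lt_const har, eventually_gt_atTop 0] with n hn hn0
    have hn' : ((‖a ^ n‖₊ : ENNReal) ^ (1 / (n : ℝ))) ^ (n : ℝ) < (r : ENNReal) ^ (n : ℝ) :=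
      ENNReal.rpow_lt_rpow hn (by positivity)
    rw [← ENNReal.rpow_mul, one_div_mul_cancel (by positivity), ENNReal.rpow_one,
      ENNReal.rpow_natCast, ← ENNReal.coe_pow, ENNReal.coe_lt_coe] at hn'
    exact hn'.le
  refine squeeze_zero_norm' (hbound.mono fun n hn => ?_)
    (tendsto_pow_atTop_nhds_zero_of_lt_one r.coe_nonneg (by exact_mod_cast hr1))
  exact_mod_cast hn

namespace Module.End

theorem tendsto_pow_apply_nhds_zero {E : Type*} [NormedAddCommGroup E]
    [NormedSpace ℂ E] [FiniteDimensional ℂ E] (f : Module.End ℂ E)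
    (hf : ∀ μ, f.charpoly.IsRoot μ → ‖μ‖ < 1) (x : E) :
    Tendsto (fun m : ℕ => (f ^ m) x) atTop (𝓝 0) := by
  set F := Module.End.toContinuousLinearMap E f
  have hspec : spectralRadius ℂ F < 1 := by
    rcases (spectrum ℂ F).eq_empty_or_nonempty with h | h
    · simp [spectralRadius, h]
    · refine ENNReal.coe_one ▸ spectrum.spectralRadius_lt_of_forall_lt_of_nonempty h fun μ hμ => ?_
      rw [AlgEquiv.spectrum_eq, mem_spectrum_iff_isRoot_charpoly] at hμ
      exact_mod_cast hf μ hμ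
  have hpow (m : ℕ) : (F ^ m) x = (f ^ m) x := by rw [← map_pow]; rfl
  simpa [Function.comp_def, hpow] using
    ((ContinuousLinearMap.apply ℂ E x).continuous.tendsto 0).comp
      (tendsto_pow_nhds_zero_of_spectralRadius_lt_one F hspec)

section RankOneCorrection

variable {K V : Type*} [Field K] [AddCommGroup V] [Module K V]
  {f : Module.End K V} {P : V} {ℓ : V →ₗ[K] K}

theorem pow_sub_smulRight_apply_of_ker (hℓf : ∀ x, ℓ (f x) = ℓ x) (m : ℕ) {y : V}
    (hy : ℓ y = 0) : ((f - ℓ.smulRight P) ^ m) y = (f ^ m) y := by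
  induction m generalizing y with
  | zero => rfl
  | succ m ih =>
    have hfy : ℓ (f y) = 0 := (hℓf y).trans hy
    rw [pow_succ, pow_succ, mul_apply, mul_apply, ← ih hfy]
    simp [hy]

theorem HasEigenvector.of_sub_smulRight (hℓf : ∀ x, ℓ (f x) = ℓ x) (hℓP : ℓ P = 1)
    {μ : K} (hμ : μ ≠ 0) {v : V} (hv : (f - ℓ.smulRight P).HasEigenvector μ v) :
    f.HasEigenvector μ v ∧ ℓ v = 0 := by
  have hTv : f v - ℓ v • P = μ • v := by simpa using hv.apply_eq_smul
  have hℓv : ℓ v = 0 := by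
    have := congrArg ℓ hTv
    simp only [map_sub, map_smul, hℓf, hℓP, smul_eq_mul, mul_one, sub_self] at this
    exact (mul_eq_zero.mp this.symm).resolve_left hμ
  refine ⟨⟨mem_eigenspace_iff.mpr ?_, hv.2⟩, hℓv⟩
  simpa [hℓv] using hTv

theorem eq_zero_of_apply_eq_self_of_rootMultiplicity_le_one [FiniteDimensional K V]
    (h1 : f.charpoly.rootMultiplicity 1 ≤ 1) (hP : f P = P) (hℓP : ℓ P = 1)
    {v : V} (hv : f v = v) (hℓv : ℓ v = 0) : v = 0 := by
  by_contra hv0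
  have hindep : LinearIndependent K ![P, v] := by
    refine LinearIndependent.pair_iff.mpr fun s t hst => ?_
    have hs : s = 0 := by simpa [hℓP, hℓv] using congrArg ℓ hst
    subst hs
    exact ⟨rfl, (smul_eq_zero.mp (by simpa using hst)).resolve_right hv0⟩
  have hspan : Submodule.span K (Set.range ![P, v]) ≤ f.eigenspace 1 := by
    rw [Submodule.span_le, Set.range_subset_iff]
    intro i
    fin_cases i <;> simp [hP, hv]
  have hrank := (Submodule.finrank_mono hspan).trans (LinearMap.finrank_eigenspace_le f 1)
  rw [finrank_span_eq_card hindep, Fintype.card_fin] at hrank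
  omega

end RankOneCorrection

theorem norm_lt_one_of_isRoot_charpoly_sub_smulRight {K V : Type*} [NormedField K]
    [AddCommGroup V] [Module K V] [FiniteDimensional K V] {f : Module.End K V} {P : V}
    {ℓ : V →ₗ[K] K} (h1 : f.charpoly.rootMultiplicity 1 ≤ 1)
    (h2 : ∀ z ∈ f.charpoly.roots, z ≠ 1 → ‖z‖ < 1)
    (hP : f P = P) (hℓf : ∀ x, ℓ (f x) = ℓ x) (hℓP : ℓ P = 1) {μ : K}
    (hμ : (f - ℓ.smulRight P).charpoly.IsRoot μ) : ‖μ‖ < 1 := by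
  rcases eq_or_ne μ 0 with rfl | hμ0
  · simp
  obtain ⟨v, hv⟩ := ((hasEigenvalue_iff_isRoot_charpoly _ _).mpr hμ).exists_hasEigenvector
  obtain ⟨hfv, hℓv⟩ := hv.of_sub_smulRight hℓf hℓP hμ0
  have hμ1 : μ ≠ 1 := by
    rintro rfl
    exact hfv.2 <| eq_zero_of_apply_eq_self_of_rootMultiplicity_le_one h1 hP hℓP
      (by simpa using hfv.apply_eq_smul) hℓv
  exact h2 μ ((Polynomial.mem_roots f.charpoly_monic.ne_zero).mpr
    ((hasEigenvalue_iff_isRoot_charpoly _ _).mp (hasEigenvalue_of_hasEigenvector hfv))) hμ1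

theorem tendsto_pow_apply_nhds_smul_of_rootMultiplicity_le_one {E : Type*}
    [NormedAddCommGroup E] [NormedSpace ℂ E] [FiniteDimensional ℂ E] (f : Module.End ℂ E)
    (h1 : f.charpoly.rootMultiplicity 1 ≤ 1) (h2 : ∀ z ∈ f.charpoly.roots, z ≠ 1 → ‖z‖ < 1)
    {P : E} {ℓ : E →ₗ[ℂ] ℂ} (hP : f P = P) (hℓf : ∀ x, ℓ (f x) = ℓ x) (hℓP : ℓ P = 1)
    (x : E) : Tendsto (fun m : ℕ => (f ^ m) x) atTop (𝓝 (ℓ x • P)) := by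
  have hdecomp (m : ℕ) :
      (f ^ m) x = ℓ x • P + ((f - ℓ.smulRight P) ^ m) (x - ℓ x • P) := by
    rw [pow_sub_smulRight_apply_of_ker hℓf m (by simp [hℓP]), map_sub, map_smul,
      pow_apply f m P, Function.iterate_fixed hP]
    abel
  simpa [hdecomp] using tendsto_const_nhds.add <| tendsto_pow_apply_nhds_zero _
    (fun μ hμ => norm_lt_one_of_isRoot_charpoly_sub_smulRight h1 h2 hP hℓf hℓP hμ) (x - ℓ x • P)

end Module.End

/-- Convergence of iterates to the fixed-point projection: if `Φ` is a linear endomorphism of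
the space of `D × D` complex matrices whose characteristic polynomial has `1` as a root of
multiplicity one while every other root has modulus `< 1`, and `P`, `Λ` satisfy `Φ P = P`,
`trace (Λᴴ * Φ X) = trace (Λᴴ * X)` for all `X`, and `trace (Λᴴ * P) = 1`, then for every `X`
the iterates `Φ^m X` converge entrywise to `trace (Λᴴ * X) • P`. -/
theorem iterates_tendsto_fixedPoint_projection
    (D : ℕ)
    (Φ : Matrix (Fin D) (Fin D) ℂ →ₗ[ℂ] Matrix (Fin D) (Fin D) ℂ)
    (h1 : Polynomial.rootMultiplicity 1 (LinearMap.charpoly Φ) = 1)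
    (h2 : ∀ z ∈ (LinearMap.charpoly Φ).roots, z ≠ 1 → ‖z‖ < 1)
    (P Λ : Matrix (Fin D) (Fin D) ℂ)
    (hP : Φ P = P)
    (hΛ : ∀ X : Matrix (Fin D) (Fin D) ℂ, (Λᴴ * Φ X).trace = (Λᴴ * X).trace)
    (hnorm : (Λᴴ * P).trace = 1) :
    ∀ X : Matrix (Fin D) (Fin D) ℂ, ∀ i j : Fin D,
      Tendsto (fun m : ℕ => ((Φ ^ m) X) i j) atTop
        (nhds (((Λᴴ * X).trace • P) i j)) := by
  intro X i j
  let : NormedAddCommGroup (Matrix (Fin D) (Fin D) ℂ) := Matrix.normedAddCommGroup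
  let : NormedSpace ℂ (Matrix (Fin D) (Fin D) ℂ) := Matrix.normedSpace
  let ℓ := traceLinearMap (Fin D) ℂ ℂ ∘ₗ LinearMap.mulLeft ℂ Λᴴ
  have h := Module.End.tendsto_pow_apply_nhds_smul_of_rootMultiplicity_le_one Φ h1.le h2
    (ℓ := ℓ) hP hΛ hnorm X
  exact tendsto_pi_nhds.1 (tendsto_pi_nhds.1 h i) j
end

section
/- Replica identity for the purity of the comb subsystem: fix d, D ≥ 1, a tensor A : Fin d → Matrix (Fin D) (Fin D) ℂ, and integers k, p ≥ 1 with n = k·p. Then the unnormalized reduced density matrix σ_k^{(n)} of the subsystem consisting of every k-th site of the length-n MPS satisfies trace(σ_k^{(n)} * σ_k^{(n)}) = trace(T̂_k ^ p), where T̂_k = (T ⊗ₖ T)^(k−1) * U * (T ⊗ₖ T) * U is the twisted transfer operator built from the transfer matrix T and the partial-swap matrix U. -/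
open Matrix
open scoped Kronecker

/-- The unnormalized MPS wavefunction with periodic boundary conditions:
`ψₙ i = trace (A (i 0) * A (i 1) * ⋯ * A (i (n-1)))`. -/
noncomputable def mpsPsi {d D : ℕ} (n : ℕ) (A : Fin d → Matrix (Fin D) (Fin D) ℂ)
    (i : Fin n → Fin d) : ℂ :=
  ((List.ofFn fun j : Fin n => A (i j)).prod).trace

/-- The full configuration on a chain of `k * p` sites obtained from the configuration `I` on
the kept sites (those with index `≡ k - 1 (mod k)`) and the configuration `c` on the
traced-out sites. -/
def combCfg (d k p : ℕ) (I : Fin p → Fin d)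
    (c : {m : Fin (k * p) // (m : ℕ) % k ≠ k - 1} → Fin d) : Fin (k * p) → Fin d :=
  fun m =>
    if h : (m : ℕ) % k = k - 1 then I ⟨(m : ℕ) / k, Nat.div_lt_of_lt_mul m.2⟩
    else c ⟨m, h⟩

/-- The unnormalized reduced density matrix of the subsystem consisting of every `k`-th site
of the length-`k * p` MPS built from the tensor `A`. -/
noncomputable def combReducedState (d D k p : ℕ) (A : Fin d → Matrix (Fin D) (Fin D) ℂ) :
    Matrix (Fin p → Fin d) (Fin p → Fin d) ℂ :=
  fun J I => ∑ c : {m : Fin (k * p) // (m : ℕ) % k ≠ k - 1} → Fin d,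
    mpsPsi (k * p) A (combCfg d k p I c) * star (mpsPsi (k * p) A (combCfg d k p J c))

/-- The transfer matrix `T = ∑ i, A i ⊗ₖ (A i).map star` of the MPS tensor `A`. -/
noncomputable def mpsTransfer {d D : ℕ} (A : Fin d → Matrix (Fin D) (Fin D) ℂ) :
    Matrix (Fin D × Fin D) (Fin D × Fin D) ℂ :=
  ∑ i, A i ⊗ₖ (A i).map star

/-- The partial-swap matrix `U` on `(Fin D × Fin D) × (Fin D × Fin D)`, swapping the two
conjugated bond factors. -/
def partialSwap (D : ℕ) :
    Matrix ((Fin D × Fin D) × (Fin D × Fin D)) ((Fin D × Fin D) × (Fin D × Fin D)) ℂ :=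
  fun x y =>
    if x.1.1 = y.1.1 ∧ x.2.1 = y.2.1 ∧ x.1.2 = y.2.2 ∧ x.2.2 = y.1.2 then 1 else 0

/-- The twisted transfer operator `T̂_k = (T ⊗ₖ T)^(k-1) * U * (T ⊗ₖ T) * U`. -/
noncomputable def twistedTransfer {d D : ℕ} (k : ℕ)
    (A : Fin d → Matrix (Fin D) (Fin D) ℂ) :
    Matrix ((Fin D × Fin D) × (Fin D × Fin D)) ((Fin D × Fin D) × (Fin D × Fin D)) ℂ :=
  (mpsTransfer A ⊗ₖ mpsTransfer A) ^ (k - 1) * partialSwap D *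
    (mpsTransfer A ⊗ₖ mpsTransfer A) * partialSwap D

/-!
Expanding `σ * σ` gives a sum over `I, J, c, c'` of products
`ψ(I▷c) ψ̄(J▷c) ψ(J▷c') ψ̄(I▷c')` of four amplitudes, and such a product is the trace of a
product of site matrices on the bond space of two replicas (ket ⊗ bra of each). On a traced-out
site both replicas carry the same configuration in ket and bra, giving a term of `T ⊗ₖ T`; on a
kept site the bra configurations of the replicas are exchanged, which is conjugation by `U`.
Since `(I, c) ↦ I▷c` is a bijection onto all configurations, the sum factorizes site by site
into the product of `k`-periodic factors `(T ⊗ₖ T)^(k-1) * (U * (T ⊗ₖ T) * U)`, i.e. `T̂_k ^ p`.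
-/

theorem List.ofFn_val_eq_map_range {M : Type*} (f : ℕ → M) (n : ℕ) :
    List.ofFn (fun i : Fin n => f i) = (List.range n).map f := by
  rw [List.ofFn_eq_map, ← List.map_coe_finRange_eq_range, List.map_map]; rfl

theorem List.prod_range_map_mod {M : Type*} [Monoid M] (f : ℕ → M) (k p : ℕ) :
    ((List.range (k * p)).map fun m => f (m % k)).prod = ((List.range k).map f).prod ^ p := by
  induction p with
  | zero => simp
  | succ p ih =>
    have hblock : ((List.range k).map fun j => f ((k * p + j) % k)) = (List.range k).map f :=
      List.map_congr_left fun j hj => by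
        rw [Nat.mul_add_mod, Nat.mod_eq_of_lt (List.mem_range.mp hj)]
    rw [Nat.mul_succ, List.range_add, List.map_append, List.prod_append, ih, List.map_map,
      Function.comp_def, hblock, pow_succ]

theorem List.prod_range_map_ite_last {M : Type*} [Monoid M] (X Y : M) {k : ℕ} (hk : 1 ≤ k) :
    ((List.range k).map fun j => if j = k - 1 then X else Y).prod = Y ^ (k - 1) * X := by
  obtain ⟨m, rfl⟩ : ∃ m, k = m + 1 := ⟨k - 1, by omega⟩
  have hY : ((List.range m).map fun j => if j = m then X else Y) = List.replicate m Y := by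
    rw [List.map_congr_left fun j hj => if_neg (List.mem_range.mp hj).ne, List.map_const',
      List.length_range]
  simp [List.range_succ, hY]

theorem List.prod_ofFn_sum {R ι : Type*} [Semiring R] [Fintype ι] :
    ∀ (n : ℕ) (B : Fin n → ι → R),
      (List.ofFn fun j => ∑ i, B j i).prod
        = ∑ g : Fin n → ι, (List.ofFn fun j => B j (g j)).prod
  | 0, B => by simp
  | n + 1, B => by
    rw [List.ofFn_succ, List.prod_cons, List.prod_ofFn_sum n (fun j => B j.succ),
      Finset.sum_mul_sum, ← (Fin.consEquiv fun _ => ι).sum_comp, Fintype.sum_prod_type]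
    simp [List.ofFn_succ, Fin.consEquiv]

theorem Matrix.prod_ofFn_kronecker_prod_ofFn {α m n : Type*} [CommSemiring α] [Fintype m]
    [DecidableEq m] [Fintype n] [DecidableEq n] :
    ∀ (l : ℕ) (f : Fin l → Matrix m m α) (g : Fin l → Matrix n n α),
      (List.ofFn f).prod ⊗ₖ (List.ofFn g).prod = (List.ofFn fun j => f j ⊗ₖ g j).prod
  | 0, f, g => by simp
  | l + 1, f, g => by
    simp only [List.ofFn_succ, List.prod_cons, mul_kronecker_mul, prod_ofFn_kronecker_prod_ofFn l]

theorem Matrix.trace_prod_ofFn_mul_trace_prod_ofFn {α m n : Type*} [CommSemiring α] [Fintype m]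
    [DecidableEq m] [Fintype n] [DecidableEq n] (l : ℕ) (f : Fin l → Matrix m m α)
    (g : Fin l → Matrix n n α) :
    (List.ofFn f).prod.trace * (List.ofFn g).prod.trace
      = (List.ofFn fun j => f j ⊗ₖ g j).prod.trace := by
  rw [← trace_kronecker, prod_ofFn_kronecker_prod_ofFn]

theorem partialSwap_mul_kronecker_mul_partialSwap {D : ℕ} (P Q R S : Matrix (Fin D) (Fin D) ℂ) :
    partialSwap D * ((P ⊗ₖ Q) ⊗ₖ (R ⊗ₖ S)) * partialSwap D
      = (P ⊗ₖ S) ⊗ₖ (R ⊗ₖ Q) := by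
  ext ⟨⟨a, b⟩, c, e⟩ ⟨⟨a', b'⟩, c', e'⟩
  simp only [mul_apply, partialSwap, ite_and, kroneckerMap_apply, ite_mul, one_mul, zero_mul,
    Fintype.sum_prod_type, Finset.sum_ite_irrel, Finset.sum_ite_eq, Finset.mem_univ, if_true,
    Finset.sum_const_zero, mul_ite, mul_one, mul_zero, Finset.sum_ite_eq']
  ring

section Replica

variable {d D : ℕ} (A : Fin d → Matrix (Fin D) (Fin D) ℂ)

theorem mpsPsi_mul_star_mpsPsi {n : ℕ} (w x : Fin n → Fin d) :
    mpsPsi n A w * star (mpsPsi n A x)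
      = (List.ofFn fun j => A (w j) ⊗ₖ (A (x j)).map star).prod.trace := by
  have hstar : star (mpsPsi n A x) = (List.ofFn fun j => (A (x j)).map star).prod.trace := by
    rw [mpsPsi, ← starRingEnd_apply, AddMonoidHom.map_trace, ← RingHom.mapMatrix_apply,
      map_list_prod, List.map_ofFn]
    rfl
  rw [hstar, mpsPsi, trace_prod_ofFn_mul_trace_prod_ofFn]

noncomputable def replicaSite (q : Fin d × Fin d) :
    Matrix ((Fin D × Fin D) × (Fin D × Fin D)) ((Fin D × Fin D) × (Fin D × Fin D)) ℂ :=
  (A q.1 ⊗ₖ (A q.1).map star) ⊗ₖ (A q.2 ⊗ₖ (A q.2).map star)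

noncomputable def swappedReplicaSite (q : Fin d × Fin d) :
    Matrix ((Fin D × Fin D) × (Fin D × Fin D)) ((Fin D × Fin D) × (Fin D × Fin D)) ℂ :=
  (A q.1 ⊗ₖ (A q.2).map star) ⊗ₖ (A q.2 ⊗ₖ (A q.1).map star)

noncomputable def combReplicaSite (k m : ℕ) (q : Fin d × Fin d) :
    Matrix ((Fin D × Fin D) × (Fin D × Fin D)) ((Fin D × Fin D) × (Fin D × Fin D)) ℂ :=
  if m % k = k - 1 then swappedReplicaSite A q else replicaSite A q

theorem mpsTransfer_kronecker_mpsTransfer :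
    mpsTransfer A ⊗ₖ mpsTransfer A = ∑ q, replicaSite A q := by
  ext x y
  simp only [mpsTransfer, replicaSite, kroneckerMap_apply, Matrix.sum_apply, Finset.sum_mul_sum,
    Fintype.sum_prod_type]

theorem partialSwap_mul_replicaSite_mul_partialSwap (q : Fin d × Fin d) :
    partialSwap D * replicaSite A q * partialSwap D = swappedReplicaSite A q :=
  partialSwap_mul_kronecker_mul_partialSwap _ _ _ _

theorem sum_combReplicaSite (k m : ℕ) :
    ∑ q, combReplicaSite A k m q
      = if m % k = k - 1 then
          partialSwap D * (mpsTransfer A ⊗ₖ mpsTransfer A) * partialSwap D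
        else mpsTransfer A ⊗ₖ mpsTransfer A := by
  rw [mpsTransfer_kronecker_mpsTransfer, Finset.mul_sum, Finset.sum_mul]
  unfold combReplicaSite
  split_ifs
  · simp only [partialSwap_mul_replicaSite_mul_partialSwap]
  · rfl

theorem trace_twistedTransfer_pow {k : ℕ} (hk : 1 ≤ k) (p : ℕ) :
    (twistedTransfer k A ^ p).trace
      = ∑ g : Fin (k * p) → Fin d × Fin d,
          (List.ofFn fun m : Fin (k * p) => combReplicaSite A k m (g m)).prod.trace := by
  set f : ℕ → _ := fun j =>
    if j = k - 1 then partialSwap D * (mpsTransfer A ⊗ₖ mpsTransfer A) * partialSwap D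
    else mpsTransfer A ⊗ₖ mpsTransfer A
  calc (twistedTransfer k A ^ p).trace = (((List.range k).map f).prod ^ p).trace := by
        rw [List.prod_range_map_ite_last _ _ hk, twistedTransfer]
        simp only [mul_assoc]
    _ = ((List.range (k * p)).map fun m => f (m % k)).prod.trace := by
        rw [List.prod_range_map_mod]
    _ = _ := by
        simp only [f, ← sum_combReplicaSite, ← List.ofFn_val_eq_map_range, List.prod_ofFn_sum,
          trace_sum]

end Replica

section Comb

variable {d k p : ℕ}

abbrev TracedSites (k p : ℕ) : Type := {m : Fin (k * p) // (m : ℕ) % k ≠ k - 1}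

def combKeptSite (hk : 1 ≤ k) (q : Fin p) : Fin (k * p) :=
  ⟨k * q + (k - 1), by
    calc k * q + (k - 1) < k * (q + 1) := by rw [Nat.mul_succ]; omega
      _ ≤ k * p := Nat.mul_le_mul_left k q.2⟩

theorem combKeptSite_mod (hk : 1 ≤ k) (q : Fin p) : (combKeptSite hk q : ℕ) % k = k - 1 := by
  rw [combKeptSite, Nat.mul_add_mod, Nat.mod_eq_of_lt (by omega)]

theorem combKeptSite_div (hk : 1 ≤ k) (q : Fin p) : (combKeptSite hk q : ℕ) / k = q := by
  rw [combKeptSite, Nat.mul_add_div hk, Nat.div_eq_of_lt (by omega), add_zero]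

theorem combCfg_bijective (hk : 1 ≤ k) :
    Function.Bijective fun x : (Fin p → Fin d) × (TracedSites k p → Fin d) =>
      combCfg d k p x.1 x.2 := by
  refine Function.bijective_iff_has_inverse.mpr
    ⟨fun w => (fun q => w (combKeptSite hk q), fun t => w t.1),
      fun ⟨I, c⟩ => ?_, fun w => ?_⟩
  · refine Prod.ext (funext fun q => ?_) (funext fun t => dif_neg t.2)
    simp only [combCfg, dif_pos (combKeptSite_mod hk q)]
    exact congrArg I (Fin.ext (combKeptSite_div hk q))
  · funext m
    by_cases h : (m : ℕ) % k = k - 1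
    · simp only [combCfg, dif_pos h]
      congr 1
      ext
      change k * ((m : ℕ) / k) + (k - 1) = m
      rw [← h, Nat.div_add_mod]
    · exact dif_neg h

end Comb

section Purity

variable {d D k p : ℕ} (A : Fin d → Matrix (Fin D) (Fin D) ℂ)

theorem mpsPsi_combCfg_replica (I J : Fin p → Fin d)
    (c c' : TracedSites k p → Fin d) :
    mpsPsi (k * p) A (combCfg d k p I c) * star (mpsPsi (k * p) A (combCfg d k p J c)) *
        (mpsPsi (k * p) A (combCfg d k p J c') * star (mpsPsi (k * p) A (combCfg d k p I c')))
      = (List.ofFn fun m : Fin (k * p) =>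
          combReplicaSite A k m (combCfg d k p I c m, combCfg d k p J c' m)).prod.trace := by
  rw [mpsPsi_mul_star_mpsPsi, mpsPsi_mul_star_mpsPsi, trace_prod_ofFn_mul_trace_prod_ofFn]
  congr 3
  funext m
  by_cases h : (m : ℕ) % k = k - 1 <;>
    simp [combCfg, combReplicaSite, replicaSite, swappedReplicaSite, h]

theorem trace_combReducedState_mul_self :
    (combReducedState d D k p A * combReducedState d D k p A).trace
      = ∑ x : (Fin p → Fin d) × (TracedSites k p → Fin d),
          ∑ y : (Fin p → Fin d) × (TracedSites k p → Fin d),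
            (List.ofFn fun m : Fin (k * p) => combReplicaSite A k m
              (combCfg d k p x.1 x.2 m, combCfg d k p y.1 y.2 m)).prod.trace := by
  rw [trace]
  simp only [diag, mul_apply, combReducedState, Finset.sum_mul_sum, Fintype.sum_prod_type,
    mpsPsi_combCfg_replica]
  rw [Finset.sum_comm]
  exact Finset.sum_congr rfl fun I _ => Finset.sum_comm

end Purity

theorem purity_eq_trace_twistedTransfer_pow_general
    (d D k p : ℕ) (hk : 1 ≤ k)
    (A : Fin d → Matrix (Fin D) (Fin D) ℂ) :
    (combReducedState d D k p A * combReducedState d D k p A).trace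
      = ((twistedTransfer k A) ^ p).trace := by
  have hcomb := combCfg_bijective (d := d) (p := p) hk
  rw [trace_combReducedState_mul_self, trace_twistedTransfer_pow A hk]
  conv_rhs => rw [← (Equiv.arrowProdEquivProdArrow _ _ _).symm.sum_comp, Fintype.sum_prod_type]
  refine Fintype.sum_bijective _ hcomb _ _ fun x => ?_
  exact Fintype.sum_bijective _ hcomb _ _ fun y => rfl

/-- Replica identity for the purity of the comb subsystem: for `n = k * p`, the unnormalized
reduced density matrix `σ` of every `k`-th site satisfies
`trace (σ * σ) = trace (T̂_k ^ p)`. -/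
theorem purity_eq_trace_twistedTransfer_pow
    (d D k p : ℕ) (hd : 1 ≤ d) (hD : 1 ≤ D) (hk : 1 ≤ k) (hp : 1 ≤ p)
    (A : Fin d → Matrix (Fin D) (Fin D) ℂ) :
    (combReducedState d D k p A * combReducedState d D k p A).trace
      = ((twistedTransfer k A) ^ p).trace :=
  purity_eq_trace_twistedTransfer_pow_general d D k p hk A
end

section
/- Bounds on the asymptotic twisted eigenvalue: let D, d ≥ 1, let Φ be a unital CP map on D×D complex matrices with Kraus operators K : Fin d → Matrix (Fin D) (Fin D) ℂ (∑_a (K a) * (K a)ᴴ = 1), let Λ be a positive-definite D×D matrix with trace Λ = 1 which is a fixed point of the adjoint map, ∑_a (K a)ᴴ * Λ * (K a) = Λ, and let λ > 0 be such that Λ − λ•1 is positive semidefinite. Set t̂ = (trace((Λ ⊗ₖ Λ) * (Φ⊗Φ)(𝔰) * 𝔰)).re and let T = ∑_a (K a) ⊗ₖ ((K a).map star) be the matrix representation of Φ. Then 1/d ≤ t̂ and t̂ ≤ 1 − λ² · (D² − (trace(Tᴴ * T)).re). -/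
open Matrix
open scoped Kronecker ComplexOrder

/-- The swap matrix on `Fin D × Fin D`. -/
def swapMatrix (D : ℕ) : Matrix (Fin D × Fin D) (Fin D × Fin D) ℂ :=
  fun p q => if p.1 = q.2 ∧ p.2 = q.1 then 1 else 0

/-- The tensor square `Φ ⊗ Φ` of the CP map with Kraus operators `K`. -/
noncomputable def tensorSqCP {D d : ℕ} (K : Fin d → Matrix (Fin D) (Fin D) ℂ)
    (M : Matrix (Fin D × Fin D) (Fin D × Fin D) ℂ) :
    Matrix (Fin D × Fin D) (Fin D × Fin D) ℂ :=
  ∑ a : Fin d × Fin d, (K a.1 ⊗ₖ K a.2) * M * (K a.1 ⊗ₖ K a.2)ᴴ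

/-- The matrix representation `T = ∑ a, K a ⊗ₖ (K a).map star`. -/
noncomputable def transferMatrix {D d : ℕ} (K : Fin d → Matrix (Fin D) (Fin D) ℂ) :
    Matrix (Fin D × Fin D) (Fin D × Fin D) ℂ :=
  ∑ a, K a ⊗ₖ (K a).map star

/-!
Let `G a b = tr ((K a)ᴴ Λ K b)` be the Gram matrix of the Kraus operators for the `Λ`-weighted
Hilbert–Schmidt inner product and `M` the unweighted one. Then `t̂ = tr G²` and
`tr (Tᴴ T) = tr M²`, while the fixed-point equation and unitality give `tr G = 1` and `tr M = D`.
Cauchy–Schwarz on the diagonal of `G` gives `t̂ ≥ (tr G)² / d = 1 / d`. For the upper bound write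
`G = λ M + R`, where `R` is the Gram matrix for the positive semidefinite weight `Λ - λ`, so that
`λ D + tr R = 1`. For Gram matrices `tr (A B) ≤ tr A · tr B`, hence
`tr G² ≤ λ² tr M² + 2 λ D tr R + (tr R)² = λ² tr M² + 1 - λ² D²`.
-/

open scoped InnerProductSpace

namespace Matrix
variable {ι 𝕜 E : Type*} [Fintype ι] [RCLike 𝕜] [NormedAddCommGroup E] [InnerProductSpace 𝕜 E]

lemma re_trace_gram (v : ι → E) : RCLike.re (gram 𝕜 v).trace = ∑ i, ‖v i‖ ^ 2 := by
  simp [Matrix.trace, inner_self_eq_norm_sq_to_K]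

lemma re_trace_smul_add_mul_self (c : ℝ) (A B : Matrix ι ι 𝕜) :
    RCLike.re (((c : 𝕜) • A + B) * ((c : 𝕜) • A + B)).trace =
      c ^ 2 * RCLike.re (A * A).trace + 2 * c * RCLike.re (A * B).trace +
        RCLike.re (B * B).trace := by
  simp only [add_mul, mul_add, smul_mul_smul, Matrix.smul_mul, Matrix.mul_smul, trace_add,
    trace_smul, trace_mul_comm B A, map_add, smul_eq_mul, ← RCLike.ofReal_mul,
    RCLike.re_ofReal_mul]
  ring

lemma IsHermitian.re_trace_mul_self {G : Matrix ι ι 𝕜} (hG : G.IsHermitian) :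
    RCLike.re (G * G).trace = ∑ i, ∑ j, ‖G i j‖ ^ 2 := by
  simp only [Matrix.trace, diag_apply, mul_apply, map_sum]
  refine Finset.sum_congr rfl fun i _ => Finset.sum_congr rfl fun j _ => ?_
  rw [← hG.apply j i, RCLike.star_def, RCLike.mul_conj]
  norm_cast

lemma IsHermitian.sq_re_trace_div_card_le_re_trace_mul_self {G : Matrix ι ι 𝕜}
    (hG : G.IsHermitian) :
    RCLike.re G.trace ^ 2 / Fintype.card ι ≤ RCLike.re (G * G).trace := by
  refine div_le_of_le_mul₀ (Nat.cast_nonneg _) ?_ ?_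
  · rw [hG.re_trace_mul_self]; positivity
  have hdiag : ∑ i, RCLike.re (G i i) ^ 2 ≤ ∑ i, ∑ j, ‖G i j‖ ^ 2 :=
    calc ∑ i, RCLike.re (G i i) ^ 2 ≤ ∑ i, ‖G i i‖ ^ 2 := by
          refine Finset.sum_le_sum fun i _ => ?_
          rw [sq_le_sq, abs_norm]
          exact RCLike.abs_re_le_norm _
      _ ≤ ∑ i, ∑ j, ‖G i j‖ ^ 2 := by
          gcongr with i
          exact Finset.single_le_sum (f := fun j => ‖G i j‖ ^ 2) (fun _ _ => by positivity)
            (Finset.mem_univ i)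
  rw [hG.re_trace_mul_self, Matrix.trace, map_sum, mul_comm]
  calc (∑ i, RCLike.re (G.diag i)) ^ 2 ≤ Fintype.card ι * ∑ i, RCLike.re (G i i) ^ 2 :=
        sq_sum_le_card_mul_sum_sq
    _ ≤ _ := by gcongr

variable {F : Type*} [NormedAddCommGroup F] [InnerProductSpace 𝕜 F]

lemma re_trace_gram_mul_gram_le (u : ι → E) (v : ι → F) :
    RCLike.re (gram 𝕜 u * gram 𝕜 v).trace ≤ (∑ i, ‖u i‖ ^ 2) * ∑ i, ‖v i‖ ^ 2 := by
  calc RCLike.re (gram 𝕜 u * gram 𝕜 v).trace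
      ≤ ∑ i, ∑ j, (‖u i‖ * ‖v i‖) * (‖u j‖ * ‖v j‖) := by
        simp only [Matrix.trace, diag_apply, mul_apply, map_sum, gram_apply]
        gcongr with i _ j _
        calc RCLike.re (⟪u i, u j⟫_𝕜 * ⟪v j, v i⟫_𝕜) ≤ ‖⟪u i, u j⟫_𝕜 * ⟪v j, v i⟫_𝕜‖ :=
              RCLike.re_le_norm _
          _ ≤ (‖u i‖ * ‖u j‖) * (‖v j‖ * ‖v i‖) := by
              rw [norm_mul]; gcongr <;> exact norm_inner_le_norm _ _
          _ = _ := by ring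
    _ = (∑ i, ‖u i‖ * ‖v i‖) ^ 2 := by rw [sq, Finset.sum_mul_sum]
    _ ≤ _ := by
        simpa only [mul_pow] using
          Finset.sum_mul_sq_le_sq_mul_sq Finset.univ (fun i => ‖u i‖) (fun i => ‖v i‖)

end Matrix

section Kraus
variable {ι m n 𝕜 : Type*} [Fintype m] [Fintype n] [RCLike 𝕜]

noncomputable def frobeniusVec (X : Matrix m n 𝕜) : EuclideanSpace 𝕜 (m × n) :=
  WithLp.toLp 2 fun p => X p.1 p.2

lemma inner_frobeniusVec (X Y : Matrix m n 𝕜) :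
    ⟪frobeniusVec X, frobeniusVec Y⟫_𝕜 = (Xᴴ * Y).trace := by
  simp only [frobeniusVec, PiLp.inner_apply, RCLike.inner_apply, Fintype.sum_prod_type,
    Matrix.trace, diag_apply, mul_apply, conjTranspose_apply, RCLike.star_def]
  rw [Finset.sum_comm]
  simp only [mul_comm]

noncomputable def krausGram (K : ι → Matrix n n 𝕜) (P : Matrix n n 𝕜) : Matrix ι ι 𝕜 :=
  of fun a b => ((K a)ᴴ * P * K b).trace

variable (K : ι → Matrix n n 𝕜)

lemma krausGram_add (P Q : Matrix n n 𝕜) :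
    krausGram K (P + Q) = krausGram K P + krausGram K Q := by
  ext a b; simp [krausGram, Matrix.mul_add, Matrix.add_mul]

lemma krausGram_smul (c : 𝕜) (P : Matrix n n 𝕜) :
    krausGram K (c • P) = c • krausGram K P := by
  ext a b; simp [krausGram]

lemma trace_krausGram [Fintype ι] (P : Matrix n n 𝕜) :
    (krausGram K P).trace = (∑ a, (K a)ᴴ * P * K a).trace := by
  rw [Matrix.trace_sum]; rfl

lemma trace_krausGram_one [Fintype ι] [DecidableEq n] :
    (krausGram K 1).trace = (∑ a, K a * (K a)ᴴ).trace := by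
  simp only [trace_krausGram, Matrix.mul_one, Matrix.trace_sum, trace_mul_comm (K _)ᴴ]

open scoped MatrixOrder in
lemma Matrix.PosSemidef.exists_krausGram_eq_gram {P : Matrix n n 𝕜} (hP : P.PosSemidef) :
    ∃ v : ι → EuclideanSpace 𝕜 (n × n), krausGram K P = gram 𝕜 v := by
  classical
  obtain ⟨B, rfl⟩ := CStarAlgebra.nonneg_iff_eq_star_mul_self.mp hP.nonneg
  refine ⟨fun a => frobeniusVec (B * K a), ?_⟩
  ext a b
  rw [krausGram, of_apply, gram_apply, inner_frobeniusVec, conjTranspose_mul,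
    star_eq_conjTranspose]
  simp only [Matrix.mul_assoc]

end Kraus

section Swap
variable {D d : ℕ}

lemma swapMatrix_mul_kronecker (A B : Matrix (Fin D) (Fin D) ℂ) :
    swapMatrix D * (A ⊗ₖ B) = (B ⊗ₖ A) * swapMatrix D := by
  ext ⟨i, j⟩ ⟨k, l⟩
  simp [mul_apply, swapMatrix, Fintype.sum_prod_type, ite_and, mul_comm]

lemma swapMatrix_mul_self : swapMatrix D * swapMatrix D = 1 := by
  ext ⟨i, j⟩ ⟨k, l⟩
  simp [mul_apply, swapMatrix, Fintype.sum_prod_type, ite_and, one_apply, Prod.ext_iff]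

lemma swapMatrix_mul_kronecker_mul_swapMatrix (A B : Matrix (Fin D) (Fin D) ℂ) :
    swapMatrix D * (A ⊗ₖ B) * swapMatrix D = B ⊗ₖ A := by
  rw [swapMatrix_mul_kronecker, Matrix.mul_assoc, swapMatrix_mul_self, Matrix.mul_one]

lemma trace_kronecker_mul_tensorSqCP_swapMatrix (K : Fin d → Matrix (Fin D) (Fin D) ℂ)
    (Λ : Matrix (Fin D) (Fin D) ℂ) :
    ((Λ ⊗ₖ Λ) * tensorSqCP K (swapMatrix D) * swapMatrix D).trace =
      (krausGram K Λ * krausGram K Λ).trace := by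
  have hterm (a b : Fin d) :
      (Λ ⊗ₖ Λ) * ((K a ⊗ₖ K b) * swapMatrix D * (K a ⊗ₖ K b)ᴴ) * swapMatrix D =
        (Λ * K a * (K b)ᴴ) ⊗ₖ (Λ * K b * (K a)ᴴ) := by
    rw [conjTranspose_kronecker, Matrix.mul_assoc, Matrix.mul_assoc, Matrix.mul_assoc,
      ← Matrix.mul_assoc (swapMatrix D), swapMatrix_mul_kronecker_mul_swapMatrix]
    simp only [Matrix.mul_assoc, mul_kronecker_mul]
  rw [tensorSqCP, Finset.mul_sum, Finset.sum_mul, Matrix.trace_sum, Fintype.sum_prod_type]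
  simp only [hterm, trace_kronecker]
  conv_rhs => simp only [Matrix.trace, diag_apply, mul_apply]
  refine Finset.sum_congr rfl fun a _ => Finset.sum_congr rfl fun b _ => ?_
  rw [trace_mul_comm _ (K b)ᴴ, trace_mul_comm _ (K a)ᴴ, mul_comm]
  simp only [krausGram, of_apply, Matrix.mul_assoc]

lemma trace_conjTranspose_transferMatrix_mul_self (K : Fin d → Matrix (Fin D) (Fin D) ℂ) :
    ((transferMatrix K)ᴴ * transferMatrix K).trace =
      ((krausGram K 1)ᴴ * krausGram K 1).trace := by
  have hmap (A B : Matrix (Fin D) (Fin D) ℂ) :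
      (A.map star)ᴴ * B.map star = (Aᴴ * B).map star := by
    ext i j; simp [mul_apply]
  have htrace (A : Matrix (Fin D) (Fin D) ℂ) : (A.map star).trace = star A.trace := by
    simp [Matrix.trace]
  rw [transferMatrix, conjTranspose_sum, Finset.sum_mul_sum, Matrix.trace_sum]
  simp only [Matrix.trace_sum, conjTranspose_kronecker, ← mul_kronecker_mul, trace_kronecker, hmap,
    htrace]
  conv_rhs => simp only [Matrix.trace, diag_apply, mul_apply, conjTranspose_apply]
  rw [Finset.sum_comm]
  refine Finset.sum_congr rfl fun b _ => Finset.sum_congr rfl fun a _ => ?_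
  rw [mul_comm]
  simp only [krausGram, of_apply, Matrix.mul_one]

end Swap

theorem twisted_eigenvalue_bounds_general
    (D d : ℕ)
    (K : Fin d → Matrix (Fin D) (Fin D) ℂ)
    (hunital : ∑ a, K a * (K a)ᴴ = (1 : Matrix (Fin D) (Fin D) ℂ))
    (Λ : Matrix (Fin D) (Fin D) ℂ) (hΛ : Λ.PosDef) (hΛtr : Λ.trace = 1)
    (hfix : ∑ a, (K a)ᴴ * Λ * K a = Λ)
    (lam : ℝ) (hlam : 0 < lam)
    (hgap : (Λ - (lam : ℂ) • (1 : Matrix (Fin D) (Fin D) ℂ)).PosSemidef) :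
    1 / (d : ℝ) ≤ (((Λ ⊗ₖ Λ) * tensorSqCP K (swapMatrix D) * swapMatrix D).trace).re ∧
    (((Λ ⊗ₖ Λ) * tensorSqCP K (swapMatrix D) * swapMatrix D).trace).re ≤
      1 - lam ^ 2 * ((D : ℝ) ^ 2 -
        (((transferMatrix K)ᴴ * transferMatrix K).trace).re) := by
  obtain ⟨w, hw⟩ := hΛ.posSemidef.exists_krausGram_eq_gram K
  obtain ⟨u, hu⟩ := PosSemidef.one.exists_krausGram_eq_gram K
  obtain ⟨v, hv⟩ := hgap.exists_krausGram_eq_gram K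
  have hsplit : gram ℂ w = (lam : ℂ) • gram ℂ u + gram ℂ v := by
    rw [← hw, ← hu, ← hv, ← krausGram_smul, ← krausGram_add, add_sub_cancel]
  have hw1 : ∑ a, ‖w a‖ ^ 2 = 1 := by
    rw [← re_trace_gram (𝕜 := ℂ), ← hw, trace_krausGram, hfix, hΛtr, RCLike.one_re]
  have huD : ∑ a, ‖u a‖ ^ 2 = D := by
    rw [← re_trace_gram (𝕜 := ℂ), ← hu, trace_krausGram_one, hunital, trace_one]
    simp
  have hv1 : lam * D + ∑ a, ‖v a‖ ^ 2 = 1 := by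
    rw [← hw1, ← huD, ← re_trace_gram (𝕜 := ℂ), ← re_trace_gram (𝕜 := ℂ),
      ← re_trace_gram (𝕜 := ℂ), hsplit]
    simp
  rw [trace_kronecker_mul_tensorSqCP_swapMatrix, trace_conjTranspose_transferMatrix_mul_self, hw,
    hu, (isHermitian_gram ℂ u).eq]
  constructor
  · simpa [re_trace_gram, hw1] using
      (isHermitian_gram ℂ w).sq_re_trace_div_card_le_re_trace_mul_self
  · have hMR := re_trace_gram_mul_gram_le (𝕜 := ℂ) u v
    have hRR := re_trace_gram_mul_gram_le (𝕜 := ℂ) v v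
    rw [huD] at hMR
    rw [hsplit]
    refine (re_trace_smul_add_mul_self (𝕜 := ℂ) lam _ _).trans_le ?_
    simp only [RCLike.re_to_complex] at *
    nlinarith [mul_le_mul_of_nonneg_left hMR (by positivity : (0:ℝ) ≤ 2 * lam)]

/-- Bounds on the asymptotic twisted eigenvalue
`t̂ = (trace ((Λ ⊗ₖ Λ) * (Φ⊗Φ)(𝔰) * 𝔰)).re` of a unital CP map `Φ` of Kraus rank `d` with
full-rank adjoint fixed point `Λ ≥ λ • 1 > 0`:
`1/d ≤ t̂ ≤ 1 - λ² (D² - ∑ᵢ sᵢ(Φ)²)`. -/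
theorem twisted_eigenvalue_bounds
    (D d : ℕ) (hD : 1 ≤ D) (hd : 1 ≤ d)
    (K : Fin d → Matrix (Fin D) (Fin D) ℂ)
    (hunital : ∑ a, K a * (K a)ᴴ = (1 : Matrix (Fin D) (Fin D) ℂ))
    (Λ : Matrix (Fin D) (Fin D) ℂ) (hΛ : Λ.PosDef) (hΛtr : Λ.trace = 1)
    (hfix : ∑ a, (K a)ᴴ * Λ * K a = Λ)
    (lam : ℝ) (hlam : 0 < lam)
    (hgap : (Λ - (lam : ℂ) • (1 : Matrix (Fin D) (Fin D) ℂ)).PosSemidef) :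
    1 / (d : ℝ) ≤ (((Λ ⊗ₖ Λ) * tensorSqCP K (swapMatrix D) * swapMatrix D).trace).re ∧
    (((Λ ⊗ₖ Λ) * tensorSqCP K (swapMatrix D) * swapMatrix D).trace).re ≤
      1 - lam ^ 2 * ((D : ℝ) ^ 2 -
        (((transferMatrix K)ᴴ * transferMatrix K).trace).re) :=
  twisted_eigenvalue_bounds_general D d K hunital Λ hΛ hΛtr hfix lam hlam hgap
end
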